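/- Let n ≥ 2 and let J ⊆ {1,…,n−1} be a subset of size m. The number of maximal transitive partitions p of the transitive tournament on n vertices such that J ⊆ Des(p) equals the Catalan number C_{n−m−1} if J is sparse (contains no two consecutive integers), and equals 0 otherwise. -/

import Mathlib

/-- The edge set of the transitive tournament on `n` vertices (labelled `0, …, n-1`):
ordered pairs `(i, j)` with `i < j`. -/
abbrev TournEdge (n : ℕ) := {p : Fin n × Fin n // p.1 < p.2}

/-- The edge `(a, b)` of the transitive tournament, for `a < b`. -/
def te {n : ℕ} (a b : Fin n) (h : a < b) : TournEdge n := ⟨(a, b), h⟩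

/-- The edge from vertex `i` to vertex `i + 1`. -/
def consecEdge {n : ℕ} (i : ℕ) (h : i + 1 < n) : TournEdge n :=
  te ⟨i, Nat.lt_of_succ_lt h⟩ ⟨i + 1, h⟩ (Fin.mk_lt_mk.mpr (Nat.lt_succ_self i))

/-- A partition of the edge set of the transitive tournament (encoded as a setoid,
whose classes are the nonempty blocks) is transitive if for all `i < j < k` the
edge `(i,k)` lies in the same block as `(i,j)` or in the same block as `(j,k)`. -/
def IsTransitivePartition {n : ℕ} (S : Setoid (TournEdge n)) : Prop :=
  ∀ (i j k : Fin n) (hij : i < j) (hjk : j < k),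
    S.r (te i k (hij.trans hjk)) (te i j hij) ∨
      S.r (te i k (hij.trans hjk)) (te j k hjk)

/-- The edge `e` forms a singleton block of the partition encoded by `S`. -/
def IsSingletonBlock {n : ℕ} (S : Setoid (TournEdge n)) (e : TournEdge n) : Prop :=
  ∀ f, S.r f e → f = e

/-- A set of natural numbers is sparse if it contains no two consecutive integers. -/
def SparseSet (J : Finset ℕ) : Prop := ∀ i ∈ J, i + 1 ∉ J

/-!
In a maximal transitive partition every block contains exactly one edge `(k, k + 1)`: each edge
`(a, b)` shares a block with some `(k, k + 1)` with `a ≤ k < b`, and there are only `n - 1`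
blocks. So the partition is the labelling `ℓ(a, b) = k` of the edges, subject to
`ℓ(i, i + 1) = i` and `ℓ(i, k) ∈ {ℓ(i, j), ℓ(j, k)}`. For `t = ℓ(0, n - 1)` every edge `(a, b)`
with `a ≤ t < b` has label `t`, and what remains are two independent labellings, on `{0, …, t}`
and on `{t + 1, …, n - 1}`. A singleton `(i, i + 1)` forbids `t = i` (for `n ≥ 3`), and two
consecutive singletons are impossible because `(i, i + 2)` must join one of them. For sparse `J`,
indexing the allowed `t` by their rank among the non-descents turns the sum over `t` into the
Catalan recursion `C_{N+1} = ∑ C_i C_{N-i}` with `N + 1 = n - 1 - |J|`.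
-/

open Finset

theorem Finset.sum_card_filter_lt {α M : Type*} [LinearOrder α] [AddCommMonoid M]
    (s : Finset α) (f : ℕ → M) :
    ∑ t ∈ s, f #{u ∈ s | u < t} = ∑ i ∈ range #s, f i := by
  induction s using Finset.induction_on_max with
  | empty => simp
  | insert a s ha ih =>
    have has : a ∉ s := fun h => lt_irrefl a (ha a h)
    have hrank_a : {u ∈ insert a s | u < a} = s := by
      ext u
      simp only [mem_filter, mem_insert]
      exact ⟨fun ⟨h, hu⟩ => h.resolve_left hu.ne, fun h => ⟨Or.inr h, ha u h⟩⟩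
    have hrank : ∀ t ∈ s, {u ∈ insert a s | u < t} = {u ∈ s | u < t} := by
      intro t ht
      rw [filter_insert, if_neg (ha t ht).not_gt]
    rw [sum_insert has, hrank_a, sum_congr rfl fun t ht => by rw [hrank t ht], ih,
      card_insert_of_notMem has, sum_range_succ, add_comm]

theorem sum_catalan_mul_catalan_rank (s : Finset ℕ) {N : ℕ} (hs : #s = N + 1) :
    ∑ t ∈ s, catalan #{u ∈ s | u < t} * catalan (N - #{u ∈ s | u < t}) = catalan (N + 1) := by
  rw [sum_card_filter_lt s (fun i => catalan i * catalan (N - i)), hs, catalan_succ, sum_range]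

theorem card_filter_lt_range_sdiff_add_card_filter_lt {N t : ℕ} (J : Finset ℕ) (ht : t ≤ N) :
    #{u ∈ range N \ J | u < t} + #{i ∈ J | i < t} = t := by
  have hbelow : {u ∈ range N \ J | u < t} = {u ∈ range t | u ∉ J} := by
    ext u
    simp only [mem_filter, mem_sdiff, mem_range]
    constructor
    · exact fun ⟨⟨_, hu⟩, hut⟩ => ⟨hut, hu⟩
    · exact fun ⟨hut, hu⟩ => ⟨⟨by omega, hu⟩, hut⟩
  have hJ : {i ∈ J | i < t} = {u ∈ range t | u ∈ J} := by
    ext u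
    simp only [mem_filter, mem_range, and_comm]
  rw [hbelow, hJ, add_comm, card_filter_add_card_filter_not, card_range]

theorem SparseSet.mono {J J' : Finset ℕ} (hJ : SparseSet J) (h : J' ⊆ J) : SparseSet J' :=
  fun i hi hi1 => hJ i (h hi) (h hi1)

def shiftDown (J : Finset ℕ) (c : ℕ) : Finset ℕ :=
  {i ∈ J | c ≤ i}.image (· - c)

@[simp]
theorem mem_shiftDown {J : Finset ℕ} {c i : ℕ} : i ∈ shiftDown J c ↔ i + c ∈ J := by
  simp only [shiftDown, mem_image, mem_filter]
  constructor
  · rintro ⟨j, ⟨hj, hcj⟩, rfl⟩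
    rwa [Nat.sub_add_cancel hcj]
  · exact fun h => ⟨i + c, ⟨h, Nat.le_add_left c i⟩, Nat.add_sub_cancel i c⟩

theorem SparseSet.shiftDown {J : Finset ℕ} (hJ : SparseSet J) (c : ℕ) :
    SparseSet (shiftDown J c) := by
  intro i hi hi1
  rw [mem_shiftDown] at hi hi1
  exact hJ _ hi (by rwa [Nat.add_right_comm])

theorem card_filter_lt_add_card_shiftDown {J : Finset ℕ} {t : ℕ} (ht : t ∉ J) :
    #{i ∈ J | i < t} + #(shiftDown J (t + 1)) = #J := by
  have hfilter : {i ∈ J | t + 1 ≤ i} = {i ∈ J | ¬ i < t} :=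
    filter_congr fun i hi => by have : i ≠ t := fun h => ht (h ▸ hi); omega
  rw [shiftDown, card_image_of_injOn, hfilter, card_filter_add_card_filter_not]
  intro i hi j hj hij
  simp only [coe_filter, Set.mem_ofPred_eq] at hi hj hij
  omega

/-- `ℓ a b = k` encodes that the edge `(a, b)` lies in the block of `(k, k + 1)`; off the edges
`ℓ` is `0`. -/
structure IsBlockLabelling (n : ℕ) (J : Finset ℕ) (ℓ : ℕ → ℕ → ℕ) : Prop where
  eq_zero : ∀ a b, ¬(a < b ∧ b < n) → ℓ a b = 0
  apply_succ : ∀ i, i + 1 < n → ℓ i (i + 1) = i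
  trans : ∀ i j k, i < j → j < k → k < n → ℓ i k = ℓ i j ∨ ℓ i k = ℓ j k
  singleton : ∀ i ∈ J, ∀ a b, a < b → b < n → ℓ a b = i → a = i ∧ b = i + 1

abbrev BlockLabelling (n : ℕ) (J : Finset ℕ) := {ℓ : ℕ → ℕ → ℕ // IsBlockLabelling n J ℓ}

namespace IsBlockLabelling

variable {n : ℕ} {J : Finset ℕ} {ℓ : ℕ → ℕ → ℕ}

theorem apply_mem_Ico (h : IsBlockLabelling n J ℓ) {a b : ℕ} (hab : a < b) (hb : b < n) :
    ℓ a b ∈ Set.Ico a b := by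
  induction b with
  | zero => omega
  | succ c ih =>
    rcases (Nat.lt_succ_iff.mp hab).eq_or_lt with rfl | hac
    · rw [h.apply_succ a hb]
      exact ⟨le_rfl, a.lt_succ_self⟩
    · rcases h.trans a c (c + 1) hac c.lt_succ_self hb with e | e
      · obtain ⟨h₁, h₂⟩ := ih hac (by omega)
        rw [e]
        exact ⟨h₁, by omega⟩
      · rw [e, h.apply_succ c hb]
        exact ⟨hac.le, c.lt_succ_self⟩

theorem apply_eq_of_le_of_lt (h : IsBlockLabelling n J ℓ) {a₀ b₀ a b : ℕ} (hb₀ : b₀ < n)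
    (ha₀ : a₀ ≤ a) (ha : a ≤ ℓ a₀ b₀) (hb : ℓ a₀ b₀ < b) (hb₀' : b ≤ b₀) :
    ℓ a b = ℓ a₀ b₀ := by
  have hleft : ℓ a₀ b = ℓ a₀ b₀ := by
    rcases hb₀'.eq_or_lt with rfl | hbb₀
    · rfl
    rcases h.trans a₀ b b₀ (by omega) hbb₀ hb₀ with e | e
    · exact e.symm
    · have := (h.apply_mem_Ico hbb₀ hb₀).1
      omega
  rcases ha₀.eq_or_lt with rfl | ha₀a
  · exact hleft
  rcases h.trans a₀ a b ha₀a (by omega) (by omega) with e | e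
  · have := (h.apply_mem_Ico ha₀a (by omega)).2
    omega
  · rw [← e, hleft]

theorem apply_zero_last_notMem (h : IsBlockLabelling n J ℓ) (hn : 3 ≤ n) : ℓ 0 (n - 1) ∉ J :=
  fun hJ => by
    have := h.singleton _ hJ 0 (n - 1) (by omega) (by omega) rfl
    omega

theorem sparseSet (h : IsBlockLabelling n J ℓ) (hJ : J ⊆ range (n - 1)) : SparseSet J := by
  intro i hi hi1
  have hi2 : i + 2 < n := by have := mem_range.mp (hJ hi1); omega
  rcases h.trans i (i + 1) (i + 2) (by omega) (by omega) hi2 with e | e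
  · rw [h.apply_succ i (by omega)] at e
    have := h.singleton i hi i (i + 2) (by omega) hi2 e
    omega
  · rw [h.apply_succ (i + 1) hi2] at e
    have := h.singleton (i + 1) hi1 i (i + 2) (by omega) hi2 e
    omega

theorem funext {J' : Finset ℕ} {ℓ' : ℕ → ℕ → ℕ} (h : IsBlockLabelling n J ℓ)
    (h' : IsBlockLabelling n J' ℓ') (heq : ∀ a b, a < b → b < n → ℓ a b = ℓ' a b) : ℓ = ℓ' := by
  funext a b
  by_cases hab : a < b ∧ b < n
  · exact heq a b hab.1 hab.2
  · rw [h.eq_zero a b hab, h'.eq_zero a b hab]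

end IsBlockLabelling

instance (n : ℕ) (J : Finset ℕ) : Finite (BlockLabelling n J) := by
  have hlt : ∀ (ℓ : BlockLabelling n J) (a b : ℕ), ℓ.1 a b < n + 1 := by
    intro ℓ a b
    by_cases hab : a < b ∧ b < n
    · have := (ℓ.2.apply_mem_Ico hab.1 hab.2).2
      omega
    · rw [ℓ.2.eq_zero a b hab]
      omega
  refine Finite.of_injective (fun ℓ (a b : Fin n) => (⟨ℓ.1 a b, hlt ℓ a b⟩ : Fin (n + 1))) ?_
  intro ℓ ℓ' hℓ
  refine Subtype.ext (ℓ.2.funext ℓ'.2 fun a b hab hb => ?_)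
  simpa using congrFun (congrFun hℓ ⟨a, hab.trans hb⟩) ⟨b, hb⟩

theorem card_blockLabelling_of_le_two {n : ℕ} (hn : n ≤ 2) (J : Finset ℕ) :
    Nat.card (BlockLabelling n J) = 1 := by
  have hzero : IsBlockLabelling n J fun _ _ => 0 :=
    ⟨fun _ _ _ => rfl, fun i hi => by omega, fun _ _ _ _ _ _ => Or.inl rfl,
      fun i _ a b hab hb (hi : 0 = i) => by omega⟩
  rw [Nat.card_eq_one_iff_unique]
  refine ⟨⟨fun ℓ ℓ' => Subtype.ext (ℓ.2.funext ℓ'.2 fun a b hab hb => ?_)⟩, ⟨⟨_, hzero⟩⟩⟩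
  obtain ⟨rfl, rfl⟩ : a = 0 ∧ b = 1 := by omega
  rw [ℓ.2.apply_succ 0 hb, ℓ'.2.apply_succ 0 hb]

section Glue

variable {n t : ℕ} {J : Finset ℕ}

def glue (n t : ℕ) (ℓ₁ ℓ₂ : ℕ → ℕ → ℕ) : ℕ → ℕ → ℕ := fun a b =>
  if a < b ∧ b < n then
    if b ≤ t then ℓ₁ a b else if t < a then ℓ₂ (a - (t + 1)) (b - (t + 1)) + (t + 1) else t
  else 0

def leftPart (t : ℕ) (ℓ : ℕ → ℕ → ℕ) : ℕ → ℕ → ℕ := fun a b =>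
  if a < b ∧ b ≤ t then ℓ a b else 0

def rightPart (n t : ℕ) (ℓ : ℕ → ℕ → ℕ) : ℕ → ℕ → ℕ := fun a b =>
  if a < b ∧ b < n - 1 - t then ℓ (a + (t + 1)) (b + (t + 1)) - (t + 1) else 0

variable {ℓ ℓ₁ ℓ₂ : ℕ → ℕ → ℕ} {a b : ℕ}

theorem glue_of_le (hab : a < b) (hbt : b ≤ t) (ht : t < n - 1) : glue n t ℓ₁ ℓ₂ a b = ℓ₁ a b := by
  rw [glue, if_pos ⟨hab, by omega⟩, if_pos hbt]

theorem glue_of_le_of_lt (hat : a ≤ t) (htb : t < b) (hb : b < n) : glue n t ℓ₁ ℓ₂ a b = t := by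
  rw [glue, if_pos ⟨by omega, hb⟩, if_neg (by omega), if_neg (by omega)]

theorem glue_of_lt (hta : t < a) (hab : a < b) (hb : b < n) :
    glue n t ℓ₁ ℓ₂ a b = ℓ₂ (a - (t + 1)) (b - (t + 1)) + (t + 1) := by
  rw [glue, if_pos ⟨hab, hb⟩, if_neg (by omega), if_pos hta]

theorem IsBlockLabelling.glue (ht : t < n - 1) (htJ : t ∉ J)
    (h₁ : IsBlockLabelling (t + 1) {i ∈ J | i < t} ℓ₁)
    (h₂ : IsBlockLabelling (n - 1 - t) (shiftDown J (t + 1)) ℓ₂) :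
    IsBlockLabelling n J (glue n t ℓ₁ ℓ₂) where
  eq_zero a b hab := by rw [_root_.glue, if_neg hab]
  apply_succ i hi := by
    rcases le_or_gt (i + 1) t with hit | hit
    · rw [glue_of_le (by omega) hit ht, h₁.apply_succ i (by omega)]
    rcases lt_or_ge t i with hti | hti
    · rw [glue_of_lt hti (by omega) hi, show i + 1 - (t + 1) = i - (t + 1) + 1 by omega,
        h₂.apply_succ _ (by omega)]
      omega
    · rw [glue_of_le_of_lt hti (by omega) hi]
      omega
  trans i j k hij hjk hk := by
    rcases le_or_gt k t with hkt | hkt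
    · rw [glue_of_le (by omega) hkt ht, glue_of_le hij (by omega) ht, glue_of_le hjk hkt ht]
      exact h₁.trans i j k hij hjk (by omega)
    rcases lt_or_ge t i with hti | hti
    · rw [glue_of_lt hti (by omega) hk, glue_of_lt hti hij (by omega),
        glue_of_lt (by omega) hjk hk]
      rcases h₂.trans (i - (t + 1)) (j - (t + 1)) (k - (t + 1)) (by omega) (by omega) (by omega)
        with e | e
      · exact Or.inl (by omega)
      · exact Or.inr (by omega)
    rw [glue_of_le_of_lt hti hkt hk]
    rcases le_or_gt j t with hjt | hjt
    · exact Or.inr (glue_of_le_of_lt hjt hkt hk).symm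
    · exact Or.inl (glue_of_le_of_lt hti hjt (by omega)).symm
  singleton i hi a b hab hb hval := by
    rcases le_or_gt b t with hbt | hbt
    · rw [glue_of_le hab hbt ht] at hval
      have := (h₁.apply_mem_Ico hab (by omega)).2
      exact h₁.singleton i (mem_filter.mpr ⟨hi, by omega⟩) a b hab (by omega) hval
    rcases lt_or_ge t a with hta | hta
    · rw [glue_of_lt hta hab hb] at hval
      have hi' : i - (t + 1) ∈ shiftDown J (t + 1) := by
        rwa [mem_shiftDown, Nat.sub_add_cancel (by omega)]
      have := h₂.singleton _ hi' (a - (t + 1)) (b - (t + 1)) (by omega) (by omega) (by omega)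
      omega
    · rw [glue_of_le_of_lt hta hbt hb] at hval
      exact absurd (hval ▸ hi) htJ

theorem IsBlockLabelling.leftPart (h : IsBlockLabelling n J ℓ) (ht : t + 1 < n) :
    IsBlockLabelling (t + 1) {i ∈ J | i < t} (leftPart t ℓ) where
  eq_zero a b hab := by rw [_root_.leftPart, if_neg (by omega)]
  apply_succ i hi := by
    rw [_root_.leftPart, if_pos ⟨i.lt_succ_self, by omega⟩, h.apply_succ i (hi.trans ht)]
  trans i j k hij hjk hk := by
    simp only [_root_.leftPart, if_pos (⟨hij.trans hjk, by omega⟩ : i < k ∧ k ≤ t),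
      if_pos (⟨hij, by omega⟩ : i < j ∧ j ≤ t), if_pos (⟨hjk, by omega⟩ : j < k ∧ k ≤ t)]
    exact h.trans i j k hij hjk (hk.trans ht)
  singleton i hi a b hab hb hval := by
    rw [_root_.leftPart, if_pos ⟨hab, by omega⟩] at hval
    exact h.singleton i (mem_filter.mp hi).1 a b hab (hb.trans ht) hval

theorem IsBlockLabelling.rightPart (h : IsBlockLabelling n J ℓ) :
    IsBlockLabelling (n - 1 - t) (shiftDown J (t + 1)) (rightPart n t ℓ) where
  eq_zero a b hab := by rw [_root_.rightPart, if_neg hab]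
  apply_succ i hi := by
    rw [_root_.rightPart, if_pos ⟨by omega, hi⟩, show i + 1 + (t + 1) = i + (t + 1) + 1 by omega,
      h.apply_succ _ (by omega)]
    omega
  trans i j k hij hjk hk := by
    simp only [_root_.rightPart, if_pos (⟨by omega, hk⟩ : i < k ∧ k < n - 1 - t),
      if_pos (⟨hij, by omega⟩ : i < j ∧ j < n - 1 - t), if_pos (⟨hjk, hk⟩ : j < k ∧ k < n - 1 - t)]
    rcases h.trans (i + (t + 1)) (j + (t + 1)) (k + (t + 1)) (by omega) (by omega) (by omega)
      with e | e
    · exact Or.inl (by omega)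
    · exact Or.inr (by omega)
  singleton i hi a b hab hb hval := by
    rw [_root_.rightPart, if_pos ⟨hab, hb⟩] at hval
    have := (h.apply_mem_Ico (a := a + (t + 1)) (b := b + (t + 1)) (by omega) (by omega)).1
    have := h.singleton _ (mem_shiftDown.mp hi) (a + (t + 1)) (b + (t + 1)) (by omega) (by omega)
      (by omega)
    omega

theorem leftPart_glue (h₁ : IsBlockLabelling (t + 1) J ℓ₁) (ht : t < n - 1) :
    leftPart t (glue n t ℓ₁ ℓ₂) = ℓ₁ := by
  funext a b
  by_cases hab : a < b ∧ b ≤ t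
  · rw [leftPart, if_pos hab, glue_of_le hab.1 hab.2 ht]
  · rw [leftPart, if_neg hab, h₁.eq_zero a b (by omega)]

theorem rightPart_glue (h₂ : IsBlockLabelling (n - 1 - t) J ℓ₂) :
    rightPart n t (glue n t ℓ₁ ℓ₂) = ℓ₂ := by
  funext a b
  by_cases hab : a < b ∧ b < n - 1 - t
  · rw [rightPart, if_pos hab, glue_of_lt (by omega) (by omega) (by omega)]
    simp only [Nat.add_sub_cancel]
  · rw [rightPart, if_neg hab, h₂.eq_zero a b hab]

theorem glue_leftPart_rightPart (h : IsBlockLabelling n J ℓ) (hn : 2 ≤ n) :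
    glue n (ℓ 0 (n - 1)) (leftPart (ℓ 0 (n - 1)) ℓ) (rightPart n (ℓ 0 (n - 1)) ℓ) = ℓ := by
  obtain ⟨-, htn⟩ := h.apply_mem_Ico (a := 0) (b := n - 1) (by omega) (by omega)
  set t := ℓ 0 (n - 1)
  funext a b
  by_cases hab : a < b ∧ b < n
  · obtain ⟨hab, hb⟩ := hab
    rcases le_or_gt b t with hbt | htb
    · rw [glue_of_le hab hbt htn, leftPart, if_pos ⟨hab, hbt⟩]
    rcases lt_or_ge t a with hta | hat
    · have := (h.apply_mem_Ico hab hb).1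
      rw [glue_of_lt hta hab hb, rightPart, if_pos ⟨by omega, by omega⟩,
        Nat.sub_add_cancel hta, Nat.sub_add_cancel (hta.trans hab)]
      omega
    · rw [glue_of_le_of_lt hat htb hb,
        h.apply_eq_of_le_of_lt (by omega) (Nat.zero_le a) hat htb (by omega)]
  · rw [glue, if_neg hab, h.eq_zero a b hab]

end Glue

/-- Splitting at the block `t` of the longest edge `(0, n - 1)`. -/
noncomputable def glueEquiv {n : ℕ} (hn : 3 ≤ n) (J : Finset ℕ) :
    (Σ t : ↥(range (n - 1) \ J),
        BlockLabelling (t + 1) {i ∈ J | i < t} × BlockLabelling (n - 1 - t) (shiftDown J (t + 1)))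
      ≃ BlockLabelling n J := by
  have hmem : ∀ {t}, t ∈ range (n - 1) \ J ↔ t < n - 1 ∧ t ∉ J := by simp
  refine Equiv.ofBijective (fun x => ⟨glue n x.1 x.2.1.1 x.2.2.1,
    .glue (hmem.mp x.1.2).1 (hmem.mp x.1.2).2 x.2.1.2 x.2.2.2⟩) ⟨?_, ?_⟩
  · rintro ⟨⟨t, ht⟩, ℓ₁, ℓ₂⟩ ⟨⟨u, hu⟩, ℓ₁', ℓ₂'⟩ heq
    have heq : glue n t ℓ₁.1 ℓ₂.1 = glue n u ℓ₁'.1 ℓ₂'.1 := congrArg Subtype.val heq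
    obtain rfl : t = u := by
      have := congrFun (congrFun heq 0) (n - 1)
      rwa [glue_of_le_of_lt (by omega) (hmem.mp ht).1 (by omega),
        glue_of_le_of_lt (by omega) (hmem.mp hu).1 (by omega)] at this
    have h₁ : ℓ₁ = ℓ₁' := Subtype.ext <| by
      rw [← leftPart_glue ℓ₁.2 (hmem.mp ht).1, heq, leftPart_glue ℓ₁'.2 (hmem.mp ht).1]
    have h₂ : ℓ₂ = ℓ₂' := Subtype.ext <| by
      rw [← rightPart_glue (ℓ₁ := ℓ₁.1) ℓ₂.2, heq, rightPart_glue ℓ₂'.2]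
    rw [h₁, h₂]
  · rintro ⟨ℓ, h⟩
    have htn := (h.apply_mem_Ico (a := 0) (b := n - 1) (by omega) (by omega)).2
    exact ⟨⟨⟨ℓ 0 (n - 1), hmem.mpr ⟨htn, h.apply_zero_last_notMem hn⟩⟩,
      ⟨_, h.leftPart (show ℓ 0 (n - 1) + 1 < n by omega)⟩, ⟨_, h.rightPart⟩⟩,
      Subtype.ext (glue_leftPart_rightPart h (by omega))⟩

theorem card_blockLabelling_eq_sum {n : ℕ} (hn : 3 ≤ n) (J : Finset ℕ) :
    Nat.card (BlockLabelling n J) = ∑ t ∈ range (n - 1) \ J,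
      Nat.card (BlockLabelling (t + 1) {i ∈ J | i < t}) *
        Nat.card (BlockLabelling (n - 1 - t) (shiftDown J (t + 1))) := by
  rw [← Nat.card_congr (glueEquiv hn J), Nat.card_sigma]
  simp only [Nat.card_prod]
  exact sum_coe_sort (range (n - 1) \ J) fun t =>
    Nat.card (BlockLabelling (t + 1) {i ∈ J | i < t}) *
      Nat.card (BlockLabelling (n - 1 - t) (shiftDown J (t + 1)))

theorem card_blockLabelling (n : ℕ) {J : Finset ℕ} (hJ : J ⊆ range (n - 1)) (hsp : SparseSet J) :
    Nat.card (BlockLabelling n J) = catalan (n - 1 - #J) := by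
  induction n using Nat.strong_induction_on generalizing J with
  | _ n ih =>
  rcases le_or_gt n 2 with hn | hn
  · rw [card_blockLabelling_of_le_two hn]
    obtain h | h : n - 1 - #J = 0 ∨ n - 1 - #J = 1 := by omega
    all_goals simp [h]
  set s := range (n - 1) \ J
  have hmem : ∀ {t}, t ∈ s ↔ t < n - 1 ∧ t ∉ J := by simp [s]
  have hsum : ∀ t ∈ s, Nat.card (BlockLabelling (t + 1) {i ∈ J | i < t}) *
        Nat.card (BlockLabelling (n - 1 - t) (shiftDown J (t + 1))) =
      catalan #{u ∈ s | u < t} * catalan (n - 2 - #J - #{u ∈ s | u < t}) := by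
    intro t ht
    obtain ⟨htn, htJ⟩ := hmem.mp ht
    have hleft : {i ∈ J | i < t} ⊆ range t := fun i hi => mem_range.mpr (mem_filter.mp hi).2
    have hright : shiftDown J (t + 1) ⊆ range (n - 1 - t - 1) := fun i hi => by
      have := mem_range.mp (hJ (mem_shiftDown.mp hi))
      exact mem_range.mpr (by omega)
    rw [ih (t + 1) (by omega) hleft (hsp.mono (filter_subset _ _)),
      ih (n - 1 - t) (by omega) hright (hsp.shiftDown _)]
    have := card_filter_lt_add_card_shiftDown htJ
    have : #{u ∈ s | u < t} + #{i ∈ J | i < t} = t :=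
      card_filter_lt_range_sdiff_add_card_filter_lt J htn.le
    have := (card_le_card hleft).trans_eq (card_range t)
    have := (card_le_card hright).trans_eq (card_range _)
    congr 2 <;> omega
  have hcard : #s = n - 1 - #J := by rw [card_sdiff_of_subset hJ, card_range]
  have hpos : 0 < #s := by
    refine card_pos.mpr ?_
    by_cases h0 : 0 ∈ J
    · exact ⟨1, hmem.mpr ⟨by omega, hsp 0 h0⟩⟩
    · exact ⟨0, hmem.mpr ⟨by omega, h0⟩⟩
  rw [card_blockLabelling_eq_sum (by omega), sum_congr rfl hsum,
    sum_catalan_mul_catalan_rank s (show #s = n - 2 - #J + 1 by omega)]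
  congr 1
  omega

namespace IsTransitivePartition

variable {n : ℕ} {S : Setoid (TournEdge n)}

theorem exists_rel_consecEdge (hT : IsTransitivePartition S) {a b : ℕ} (hab : a < b)
    (hb : b < n) : ∃ k, ∃ hk : k + 1 < n,
      S.r (te ⟨a, hab.trans hb⟩ ⟨b, hb⟩ (Fin.mk_lt_mk.mpr hab)) (consecEdge k hk) := by
  induction b with
  | zero => omega
  | succ c ih =>
    rcases (Nat.lt_succ_iff.mp hab).eq_or_lt with rfl | hac
    · exact ⟨a, hb, S.refl' _⟩
    rcases hT ⟨a, by omega⟩ ⟨c, by omega⟩ ⟨c + 1, hb⟩ (Fin.mk_lt_mk.mpr hac)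
      (Fin.mk_lt_mk.mpr c.lt_succ_self) with e | e
    · obtain ⟨k, hk, hr⟩ := ih hac (by omega)
      exact ⟨k, hk, S.trans' e hr⟩
    · exact ⟨c, hb, e⟩

/-- Every block contains a consecutive edge, and there are only `n - 1` blocks. -/
theorem eq_of_rel_consecEdge (hT : IsTransitivePartition S) (hcard : Nat.card (Quotient S) = n - 1)
    {k k' : ℕ} (hk : k + 1 < n) (hk' : k' + 1 < n)
    (hr : S.r (consecEdge k hk) (consecEdge k' hk')) : k = k' := by
  let f : Fin (n - 1) → Quotient S := fun k => ⟦consecEdge k (by omega)⟧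
  have hsurj : f.Surjective := by
    rintro ⟨⟨⟨a, b⟩, hab⟩⟩
    obtain ⟨k, hk, hr⟩ := hT.exists_rel_consecEdge hab b.isLt
    exact ⟨⟨k, by omega⟩, Quotient.sound (S.symm' hr)⟩
  have hbij : f.Bijective := (Nat.bijective_iff_surjective_and_card f).mpr
    ⟨hsurj, by rw [hcard, Nat.card_eq_fintype_card, Fintype.card_fin]⟩
  exact congrArg Fin.val (@hbij.1 ⟨k, by omega⟩ ⟨k', by omega⟩ (Quotient.sound hr))

noncomputable def labelling (hT : IsTransitivePartition S) (a b : ℕ) : ℕ :=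
  if h : a < b ∧ b < n then (hT.exists_rel_consecEdge h.1 h.2).choose else 0

theorem rel_consecEdge_labelling (hT : IsTransitivePartition S) {a b : ℕ} (hab : a < b)
    (hb : b < n) : ∃ hk : hT.labelling a b + 1 < n,
      S.r (te ⟨a, hab.trans hb⟩ ⟨b, hb⟩ (Fin.mk_lt_mk.mpr hab)) (consecEdge _ hk) := by
  rw [labelling, dif_pos ⟨hab, hb⟩]
  exact (hT.exists_rel_consecEdge hab hb).choose_spec

theorem labelling_eq (hT : IsTransitivePartition S) (hcard : Nat.card (Quotient S) = n - 1)
    {a b k : ℕ} (hab : a < b) (hb : b < n) (hk : k + 1 < n)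
    (hr : S.r (te ⟨a, hab.trans hb⟩ ⟨b, hb⟩ (Fin.mk_lt_mk.mpr hab)) (consecEdge k hk)) :
    hT.labelling a b = k := by
  obtain ⟨hk', hr'⟩ := hT.rel_consecEdge_labelling hab hb
  exact hT.eq_of_rel_consecEdge hcard hk' hk (S.trans' (S.symm' hr') hr)

theorem isBlockLabelling_labelling (hT : IsTransitivePartition S)
    (hcard : Nat.card (Quotient S) = n - 1) {J : Finset ℕ}
    (hJ : ∀ i ∈ J, ∀ h : i + 1 < n, IsSingletonBlock S (consecEdge i h)) :
    IsBlockLabelling n J hT.labelling where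
  eq_zero a b hab := by rw [labelling, dif_neg hab]
  apply_succ i hi := hT.labelling_eq hcard i.lt_succ_self hi hi (S.refl' _)
  trans i j k hij hjk hk := by
    rcases hT ⟨i, by omega⟩ ⟨j, by omega⟩ ⟨k, hk⟩ (Fin.mk_lt_mk.mpr hij) (Fin.mk_lt_mk.mpr hjk)
      with e | e
    · obtain ⟨hl, hr⟩ := hT.rel_consecEdge_labelling hij (hjk.trans hk)
      exact Or.inl (hT.labelling_eq hcard (hij.trans hjk) hk hl (S.trans' e hr))
    · obtain ⟨hl, hr⟩ := hT.rel_consecEdge_labelling hjk hk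
      exact Or.inr (hT.labelling_eq hcard (hij.trans hjk) hk hl (S.trans' e hr))
  singleton i hi a b hab hb hval := by
    obtain ⟨hk, hr⟩ := hT.rel_consecEdge_labelling hab hb
    subst hval
    have := congrArg (fun e : TournEdge n => ((e.1.1 : ℕ), (e.1.2 : ℕ))) (hJ _ hi hk _ hr)
    simpa [te, consecEdge] using this

theorem rel_iff_labelling_eq (hT : IsTransitivePartition S)
    (hcard : Nat.card (Quotient S) = n - 1) (e f : TournEdge n) :
    S.r e f ↔ hT.labelling e.1.1 e.1.2 = hT.labelling f.1.1 f.1.2 := by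
  obtain ⟨hke, hre⟩ := hT.rel_consecEdge_labelling e.2 e.1.2.isLt
  obtain ⟨hkf, hrf⟩ := hT.rel_consecEdge_labelling f.2 f.1.2.isLt
  constructor
  · exact fun h => hT.eq_of_rel_consecEdge hcard hke hkf (S.trans' (S.symm' hre) (S.trans' h hrf))
  · intro h
    refine S.trans' hre (S.trans' ?_ (S.symm' hrf))
    simp only [h]
    exact S.refl' _

end IsTransitivePartition

def edgeLabel {n : ℕ} (ℓ : ℕ → ℕ → ℕ) (e : TournEdge n) : ℕ := ℓ e.1.1 e.1.2

namespace IsBlockLabelling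

variable {n : ℕ} {J : Finset ℕ} {ℓ : ℕ → ℕ → ℕ}

theorem isTransitivePartition_ker (h : IsBlockLabelling n J ℓ) :
    IsTransitivePartition (Setoid.ker (edgeLabel (n := n) ℓ)) :=
  fun i j k hij hjk => h.trans i j k hij hjk k.isLt

theorem card_quotient_ker (h : IsBlockLabelling n J ℓ) :
    Nat.card (Quotient (Setoid.ker (edgeLabel (n := n) ℓ))) = n - 1 := by
  have hrange : Set.range (edgeLabel (n := n) ℓ) = Set.Iio (n - 1) := by
    ext k
    constructor
    · rintro ⟨e, rfl⟩
      have := (h.apply_mem_Ico e.2 e.1.2.isLt).2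
      have := e.1.2.isLt
      exact Set.mem_Iio.mpr (by unfold edgeLabel; omega)
    · intro (hk : k < n - 1)
      exact ⟨consecEdge k (by omega), h.apply_succ k (by omega)⟩
  rw [Nat.card_congr (Setoid.quotientKerEquivRange _), hrange, ← coe_range, Nat.card_coe_set_eq,
    Set.ncard_coe_finset, card_range]

theorem isSingletonBlock_ker (h : IsBlockLabelling n J ℓ) {i : ℕ} (hi : i ∈ J) (hin : i + 1 < n) :
    IsSingletonBlock (Setoid.ker (edgeLabel ℓ)) (consecEdge i hin) := by
  rintro ⟨⟨a, b⟩, hab⟩ (he : ℓ a b = ℓ i (i + 1))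
  rw [h.apply_succ i hin] at he
  obtain ⟨ha, hb⟩ := h.singleton i hi a b hab b.isLt he
  ext <;> simp [consecEdge, te, ha, hb]

theorem labelling_ker (h : IsBlockLabelling n J ℓ) :
    h.isTransitivePartition_ker.labelling = ℓ := by
  funext a b
  by_cases hab : a < b ∧ b < n
  · obtain ⟨hk, hr⟩ := h.isTransitivePartition_ker.rel_consecEdge_labelling hab.1 hab.2
    set k := h.isTransitivePartition_ker.labelling a b
    have hr : ℓ a b = ℓ k (k + 1) := hr
    rw [hr, h.apply_succ k hk]
  · rw [IsTransitivePartition.labelling, dif_neg hab, h.eq_zero a b hab]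

end IsBlockLabelling

noncomputable def maximalTransitivePartitionEquiv (n : ℕ) (J : Finset ℕ) :
    {S : Setoid (TournEdge n) // IsTransitivePartition S ∧ Nat.card (Quotient S) = n - 1 ∧
        ∀ i ∈ J, ∀ h : i + 1 < n, IsSingletonBlock S (consecEdge i h)} ≃ BlockLabelling n J where
  toFun S := ⟨S.2.1.labelling, S.2.1.isBlockLabelling_labelling S.2.2.1 S.2.2.2⟩
  invFun ℓ := ⟨Setoid.ker (edgeLabel ℓ.1), ℓ.2.isTransitivePartition_ker,
    ℓ.2.card_quotient_ker, fun _ hi hin => ℓ.2.isSingletonBlock_ker hi hin⟩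
  left_inv S := Subtype.ext <| Setoid.ext fun e f =>
    (S.2.1.rel_iff_labelling_eq S.2.2.1 e f).symm
  right_inv ℓ := Subtype.ext ℓ.2.labelling_ker

theorem card_maximal_transitive_partitions_with_descents_general (n m : ℕ)
    (J : Finset ℕ) (hJ : J ⊆ Finset.range (n - 1)) (hm : J.card = m) :
    (SparseSet J →
      Nat.card {S : Setoid (TournEdge n) //
          IsTransitivePartition S ∧ Nat.card (Quotient S) = n - 1 ∧
          ∀ i ∈ J, ∀ h : i + 1 < n, IsSingletonBlock S (consecEdge i h)} =
        catalan (n - m - 1)) ∧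
    (¬ SparseSet J →
      Nat.card {S : Setoid (TournEdge n) //
          IsTransitivePartition S ∧ Nat.card (Quotient S) = n - 1 ∧
          ∀ i ∈ J, ∀ h : i + 1 < n, IsSingletonBlock S (consecEdge i h)} =
        0) := by
  rw [Nat.card_congr (maximalTransitivePartitionEquiv n J)]
  refine ⟨fun hsp => ?_, fun hns => ?_⟩
  · rw [card_blockLabelling n hJ hsp, hm, Nat.sub_right_comm]
  · have : IsEmpty (BlockLabelling n J) := ⟨fun ℓ => hns (ℓ.2.sparseSet hJ)⟩
    exact Nat.card_of_isEmpty

/-- For `n ≥ 2` and `J ⊆ {0, …, n-2}` of size `m`, the number of maximal transitive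
partitions `p` of the transitive tournament on `n` vertices (vertices labelled
`0, …, n-1`) with `J ⊆ Des(p)` equals the Catalan number `C_{n-m-1}` if `J` is
sparse, and `0` otherwise.  Here `Des(p)` is the set of `i` such that the edge
`(i, i+1)` forms a singleton block of `p`. -/
theorem card_maximal_transitive_partitions_with_descents (n m : ℕ) (hn : 2 ≤ n)
    (J : Finset ℕ) (hJ : J ⊆ Finset.range (n - 1)) (hm : J.card = m) :
    (SparseSet J →
      Nat.card {S : Setoid (TournEdge n) //
          IsTransitivePartition S ∧ Nat.card (Quotient S) = n - 1 ∧
          ∀ i ∈ J, ∀ h : i + 1 < n, IsSingletonBlock S (consecEdge i h)} =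
        catalan (n - m - 1)) ∧
    (¬ SparseSet J →
      Nat.card {S : Setoid (TournEdge n) //
          IsTransitivePartition S ∧ Nat.card (Quotient S) = n - 1 ∧
          ∀ i ∈ J, ∀ h : i + 1 < n, IsSingletonBlock S (consecEdge i h)} =
        0) :=
  card_maximal_transitive_partitions_with_descents_general n m J hJ hm
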